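/- Let d ≥ 1 be an integer, q > 12d a real number, and ν ∈ (0, 1 − 6d/q). Set λ_n = √(d/2 + n). Let A : ℕ⁴ → ℂ satisfy the following four bounds for all j, k, l, m ∈ ℕ: Σ_{m'∈ℕ} |A(j,k,l,m')|² ≤ (λ_j λ_k λ_l)^{4d/q}, Σ_{l'∈ℕ} |A(j,k,l',m)|² ≤ (λ_j λ_k λ_m)^{4d/q}, Σ_{k'∈ℕ} |A(j,k',l,m)|² ≤ (λ_j λ_l λ_m)^{4d/q}, and Σ_{j'∈ℕ} |A(j',k,l,m)|² ≤ (λ_k λ_l λ_m)^{4d/q}. Then there exists a constant C > 0, depending only on d, q, ν, such that for all integers 1 ≤ M ≤ N: Σ over all (j,k,l,m) ∈ {0,…,N}⁴ with max(j,k,l,m) > M of (λ_j λ_k λ_l λ_m)^{−2} |A(j,k,l,m)|² ≤ C · M^{−ν}. -/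

import Mathlib

/-- `λ_n = √(d/2 + n)`. -/
noncomputable def lamEig (d n : ℕ) : ℝ := Real.sqrt ((d : ℝ) / 2 + n)

/-!
Split the tuples with `max(j, k, l, m) > M` according to which index `x` is largest, and let
`a, b, c` be the other three. With `γ = 2(1 - ν)/3` one has
`λ_x⁻² = (λ_x²)^(-ν) (λ_x³)^(-γ) ≤ M^(-ν) (λ_a λ_b λ_c)^(-γ)`,
because `λ_x² ≥ x > M` and `λ_x` is the largest of the four eigenvalues. Summing first over `x`
with the directional bound then leaves at most `M^(-ν) (∑ₙ λₙ^(4d/q - 2 - γ))³`, a convergent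
series since `4d/q < γ` is exactly `ν < 1 - 6d/q`.
-/

open Finset Real

theorem mul_rpow_neg_two_le {P x M ν γ : ℝ} (hP : 0 < P) (hx : 0 < x) (hM : 0 < M)
    (hPx : P ≤ x ^ 3) (hMx : M ≤ x ^ 2) (hν : 0 ≤ ν) (hγ : 0 ≤ γ)
    (hνγ : 2 * ν + 3 * γ = 2) :
    (P * x) ^ (-2 : ℝ) ≤ M ^ (-ν) * P ^ (-2 - γ) := by
  have hsplit : x ^ (-2 : ℝ) = (x ^ 2) ^ (-ν) * (x ^ 3) ^ (-γ) := by
    rw [← rpow_natCast_mul hx.le, ← rpow_natCast_mul hx.le, ← rpow_add hx]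
    congr 1
    push_cast
    linarith
  calc (P * x) ^ (-2 : ℝ) = P ^ (-2 : ℝ) * ((x ^ 2) ^ (-ν) * (x ^ 3) ^ (-γ)) := by
        rw [mul_rpow hP.le hx.le, hsplit]
    _ ≤ P ^ (-2 : ℝ) * (M ^ (-ν) * P ^ (-γ)) := by
        gcongr P ^ (-2 : ℝ) * ?_
        exact mul_le_mul (rpow_le_rpow_of_nonpos hM hMx (by linarith))
          (rpow_le_rpow_of_nonpos hP hPx (by linarith)) (by positivity) (by positivity)
    _ = M ^ (-ν) * P ^ (-2 - γ) := by
        rw [sub_eq_add_neg, rpow_add hP]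
        ring

variable {d : ℕ}

theorem lamEig_pos (hd : 1 ≤ d) (n : ℕ) : 0 < lamEig d n :=
  sqrt_pos.2 (by positivity)

theorem lamEig_sq (n : ℕ) : lamEig d n ^ 2 = d / 2 + n :=
  sq_sqrt (by positivity)

theorem lamEig_mono : Monotone (lamEig d) := fun _ _ h =>
  sqrt_le_sqrt (by gcongr)

theorem lamEig_rpow (n : ℕ) (t : ℝ) : lamEig d n ^ t = ((d : ℝ) / 2 + n) ^ (t / 2) := by
  rw [lamEig, sqrt_eq_rpow, ← rpow_mul (by positivity)]
  ring_nf

theorem summable_lamEig_rpow (hd : 1 ≤ d) {t : ℝ} (ht : t < -2) :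
    Summable fun n => lamEig d n ^ t := by
  refine ((summable_one_div_nat_add_rpow ((d : ℝ) / 2) (-t / 2)).2 (by linarith)).congr
    fun n => ?_
  have hpos : (0 : ℝ) < n + d / 2 := by positivity
  rw [abs_of_pos hpos, one_div, ← rpow_neg hpos.le, lamEig_rpow, add_comm]
  ring_nf

theorem lamEig_prod_rpow_neg_two_le (hd : 1 ≤ d) {ν γ : ℝ} (hν : 0 ≤ ν) (hγ : 0 ≤ γ)
    (hνγ : 2 * ν + 3 * γ = 2) {M a b c x : ℕ} (hM : 0 < M) (hMx : M ≤ x)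
    (ha : a ≤ x) (hb : b ≤ x) (hc : c ≤ x) :
    (lamEig d a * lamEig d b * lamEig d c * lamEig d x) ^ (-2 : ℝ)
      ≤ (M : ℝ) ^ (-ν)
        * (lamEig d a ^ (-2 - γ) * lamEig d b ^ (-2 - γ) * lamEig d c ^ (-2 - γ)) := by
  have hpos := lamEig_pos hd
  rw [← mul_rpow (hpos a).le (hpos b).le, ← mul_rpow (mul_pos (hpos a) (hpos b)).le (hpos c).le]
  refine mul_rpow_neg_two_le (mul_pos (mul_pos (hpos a) (hpos b)) (hpos c)) (hpos x)
    (by exact_mod_cast hM) ?_ ?_ hν hγ hνγ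
  · rw [pow_three, ← mul_assoc]
    have hmono : Monotone (lamEig d) := lamEig_mono
    exact mul_le_mul (mul_le_mul (hmono ha) (hmono hb) (hpos b).le (hpos x).le) (hmono hc)
      (hpos c).le (mul_pos (hpos x) (hpos x)).le
  · rw [lamEig_sq]
    have : (M : ℝ) ≤ x := by exact_mod_cast hMx
    linarith [show (0 : ℝ) ≤ d / 2 by positivity]

theorem lamEig_prod_rpow_neg_two_le_of_lt_max (hd : 1 ≤ d) {ν γ : ℝ} (hν : 0 ≤ ν)
    (hγ : 0 ≤ γ) (hνγ : 2 * ν + 3 * γ = 2) {M j k l m : ℕ} (hM : 0 < M)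
    (h : M < max (max j k) (max l m)) :
    (lamEig d j * lamEig d k * lamEig d l * lamEig d m) ^ (-2 : ℝ)
      ≤ (M : ℝ) ^ (-ν) *
        (lamEig d j ^ (-2 - γ) * lamEig d k ^ (-2 - γ) * lamEig d l ^ (-2 - γ)
          + lamEig d j ^ (-2 - γ) * lamEig d k ^ (-2 - γ) * lamEig d m ^ (-2 - γ)
          + lamEig d j ^ (-2 - γ) * lamEig d l ^ (-2 - γ) * lamEig d m ^ (-2 - γ)
          + lamEig d k ^ (-2 - γ) * lamEig d l ^ (-2 - γ) * lamEig d m ^ (-2 - γ)) := by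
  have hw : ∀ n, 0 ≤ lamEig d n ^ (-2 - γ) := fun n => rpow_nonneg (lamEig_pos hd n).le _
  have hj := mul_nonneg (mul_nonneg (hw k) (hw l)) (hw m)
  have hk := mul_nonneg (mul_nonneg (hw j) (hw l)) (hw m)
  have hl := mul_nonneg (mul_nonneg (hw j) (hw k)) (hw m)
  have hm := mul_nonneg (mul_nonneg (hw j) (hw k)) (hw l)
  have hMν : 0 ≤ (M : ℝ) ^ (-ν) := by positivity
  rcases (by omega : (M < j ∧ k ≤ j ∧ l ≤ j ∧ m ≤ j) ∨ (M < k ∧ j ≤ k ∧ l ≤ k ∧ m ≤ k)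
      ∨ (M < l ∧ j ≤ l ∧ k ≤ l ∧ m ≤ l) ∨ (M < m ∧ j ≤ m ∧ k ≤ m ∧ l ≤ m))
    with
    ⟨hx, ha, hb, hc⟩ | ⟨hx, ha, hb, hc⟩ | ⟨hx, ha, hb, hc⟩ | ⟨hx, ha, hb, hc⟩
  · calc _ = (lamEig d k * lamEig d l * lamEig d m * lamEig d j) ^ (-2 : ℝ) := by ring_nf
      _ ≤ _ := lamEig_prod_rpow_neg_two_le hd hν hγ hνγ hM hx.le ha hb hc
      _ ≤ _ := by gcongr; linarith
  · calc _ = (lamEig d j * lamEig d l * lamEig d m * lamEig d k) ^ (-2 : ℝ) := by ring_nf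
      _ ≤ _ := lamEig_prod_rpow_neg_two_le hd hν hγ hνγ hM hx.le ha hb hc
      _ ≤ _ := by gcongr; linarith
  · calc _ = (lamEig d j * lamEig d k * lamEig d m * lamEig d l) ^ (-2 : ℝ) := by ring_nf
      _ ≤ _ := lamEig_prod_rpow_neg_two_le hd hν hγ hνγ hM hx.le ha hb hc
      _ ≤ _ := by gcongr; linarith
  · calc _ ≤ _ := lamEig_prod_rpow_neg_two_le hd hν hγ hνγ hM hx.le ha hb hc
      _ ≤ _ := by gcongr; linarith

section WeightedSums

variable {α : Type*} (R : Finset α) {u v : α → ℝ}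

theorem sum_mul_le_sum_mul_pow_three (hu : ∀ a, 0 ≤ u a) {F : α → α → α → α → ℝ}
    (hF : ∀ a b c, ∑ e ∈ R, F a b c e ≤ v a * v b * v c) :
    ∑ a ∈ R, ∑ b ∈ R, ∑ c ∈ R, ∑ e ∈ R, u a * u b * u c * F a b c e
      ≤ (∑ n ∈ R, u n * v n) ^ 3 :=
  calc _ = ∑ a ∈ R, ∑ b ∈ R, ∑ c ∈ R, u a * u b * u c * ∑ e ∈ R, F a b c e := by
        simp only [mul_sum]
    _ ≤ ∑ a ∈ R, ∑ b ∈ R, ∑ c ∈ R, u a * u b * u c * (v a * v b * v c) := by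
        refine sum_le_sum fun a _ => sum_le_sum fun b _ => sum_le_sum fun c _ => ?_
        exact mul_le_mul_of_nonneg_left (hF a b c) (mul_nonneg (mul_nonneg (hu a) (hu b)) (hu c))
    _ = _ := by
        simp only [pow_three, sum_mul, mul_sum]
        refine sum_congr rfl fun a _ => sum_congr rfl fun b _ => sum_congr rfl fun c _ => ?_
        ring

theorem sum_esymm₃_mul_le (hu : ∀ a, 0 ≤ u a) {f : α → α → α → α → ℝ}
    (h₁ : ∀ j k l, ∑ m ∈ R, f j k l m ≤ v j * v k * v l)
    (h₂ : ∀ j k m, ∑ l ∈ R, f j k l m ≤ v j * v k * v m)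
    (h₃ : ∀ j l m, ∑ k ∈ R, f j k l m ≤ v j * v l * v m)
    (h₄ : ∀ k l m, ∑ j ∈ R, f j k l m ≤ v k * v l * v m) :
    ∑ j ∈ R, ∑ k ∈ R, ∑ l ∈ R, ∑ m ∈ R,
      (u j * u k * u l + u j * u k * u m + u j * u l * u m + u k * u l * u m) * f j k l m
      ≤ 4 * (∑ n ∈ R, u n * v n) ^ 3 := by
  have e₂ : ∑ j ∈ R, ∑ k ∈ R, ∑ l ∈ R, ∑ m ∈ R, u j * u k * u m * f j k l m
      = ∑ j ∈ R, ∑ k ∈ R, ∑ m ∈ R, ∑ l ∈ R, u j * u k * u m * f j k l m :=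
    sum_congr rfl fun j _ => sum_congr rfl fun k _ => sum_comm
  have e₃ : ∑ j ∈ R, ∑ k ∈ R, ∑ l ∈ R, ∑ m ∈ R, u j * u l * u m * f j k l m
      = ∑ j ∈ R, ∑ l ∈ R, ∑ m ∈ R, ∑ k ∈ R, u j * u l * u m * f j k l m := by
    refine sum_congr rfl fun j _ => ?_
    rw [sum_comm]
    exact sum_congr rfl fun l _ => sum_comm
  have e₄ : ∑ j ∈ R, ∑ k ∈ R, ∑ l ∈ R, ∑ m ∈ R, u k * u l * u m * f j k l m
      = ∑ k ∈ R, ∑ l ∈ R, ∑ m ∈ R, ∑ j ∈ R, u k * u l * u m * f j k l m := by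
    rw [sum_comm]
    refine sum_congr rfl fun k _ => ?_
    rw [sum_comm]
    exact sum_congr rfl fun l _ => sum_comm
  simp only [add_mul, sum_add_distrib]
  linarith [sum_mul_le_sum_mul_pow_three R hu h₁,
    sum_mul_le_sum_mul_pow_three R hu (F := fun j k m l => f j k l m) h₂,
    sum_mul_le_sum_mul_pow_three R hu (F := fun j l m k => f j k l m) h₃,
    sum_mul_le_sum_mul_pow_three R hu (F := fun k l m j => f j k l m) h₄]

end WeightedSums

theorem sum_filter_lt_max_le (hd : 1 ≤ d) {ν γ : ℝ} (hν : 0 ≤ ν) (hγ : 0 ≤ γ)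
    (hνγ : 2 * ν + 3 * γ = 2) {M : ℕ} (hM : 0 < M) {f : ℕ → ℕ → ℕ → ℕ → ℝ}
    (hf : ∀ j k l m, 0 ≤ f j k l m) (R : Finset ℕ) :
    ∑ p ∈ (R ×ˢ R ×ˢ R ×ˢ R).filter
        (fun p : ℕ × ℕ × ℕ × ℕ => M < max (max p.1 p.2.1) (max p.2.2.1 p.2.2.2)),
      (lamEig d p.1 * lamEig d p.2.1 * lamEig d p.2.2.1 * lamEig d p.2.2.2) ^ (-2 : ℝ)
        * f p.1 p.2.1 p.2.2.1 p.2.2.2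
      ≤ (M : ℝ) ^ (-ν) * ∑ j ∈ R, ∑ k ∈ R, ∑ l ∈ R, ∑ m ∈ R,
        (lamEig d j ^ (-2 - γ) * lamEig d k ^ (-2 - γ) * lamEig d l ^ (-2 - γ)
          + lamEig d j ^ (-2 - γ) * lamEig d k ^ (-2 - γ) * lamEig d m ^ (-2 - γ)
          + lamEig d j ^ (-2 - γ) * lamEig d l ^ (-2 - γ) * lamEig d m ^ (-2 - γ)
          + lamEig d k ^ (-2 - γ) * lamEig d l ^ (-2 - γ) * lamEig d m ^ (-2 - γ))
          * f j k l m := by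
  have hw : ∀ n, 0 ≤ lamEig d n ^ (-2 - γ) := fun n => rpow_nonneg (lamEig_pos hd n).le _
  simp only [mul_sum, ← sum_product', ← mul_assoc]
  refine (sum_le_sum fun p hp => ?_).trans
    (sum_le_sum_of_subset_of_nonneg (filter_subset _ _) fun p _ _ => ?_)
  · exact mul_le_mul_of_nonneg_right
      (lamEig_prod_rpow_neg_two_le_of_lt_max hd hν hγ hνγ hM (mem_filter.1 hp).2) (hf _ _ _ _)
  · have := hw p.1; have := hw p.2.1; have := hw p.2.2.1; have := hw p.2.2.2
    have := hf p.1 p.2.1 p.2.2.1 p.2.2.2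
    positivity

/-- Let `d ≥ 1`, `q > 12d`, `ν ∈ (0, 1 − 6d/q)`. There is a constant `C > 0` depending only
on `d, q, ν` such that: if `A : ℕ⁴ → ℂ` satisfies the four directional bounds
`Σ_{m'} |A(j,k,l,m')|² ≤ (λ_j λ_k λ_l)^{4d/q}` (and the three analogous ones), then for all
`1 ≤ M ≤ N`, the sum over `(j,k,l,m) ∈ {0,…,N}⁴` with `max(j,k,l,m) > M` of
`(λ_j λ_k λ_l λ_m)^{−2} |A(j,k,l,m)|²` is at most `C M^{−ν}`. -/
theorem renormalized_energy_cauchy_bound (d : ℕ) (hd : 1 ≤ d) (q ν : ℝ)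
    (hq : 12 * (d : ℝ) < q) (hν0 : 0 < ν) (hν1 : ν < 1 - 6 * (d : ℝ) / q) :
    ∃ C : ℝ, 0 < C ∧ ∀ A : ℕ → ℕ → ℕ → ℕ → ℂ,
      (∀ j k l : ℕ, ∀ F : Finset ℕ,
          ∑ m' ∈ F, ‖A j k l m'‖ ^ 2
            ≤ (lamEig d j * lamEig d k * lamEig d l) ^ (4 * (d : ℝ) / q)) →
      (∀ j k m : ℕ, ∀ F : Finset ℕ,
          ∑ l' ∈ F, ‖A j k l' m‖ ^ 2
            ≤ (lamEig d j * lamEig d k * lamEig d m) ^ (4 * (d : ℝ) / q)) →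
      (∀ j l m : ℕ, ∀ F : Finset ℕ,
          ∑ k' ∈ F, ‖A j k' l m‖ ^ 2
            ≤ (lamEig d j * lamEig d l * lamEig d m) ^ (4 * (d : ℝ) / q)) →
      (∀ k l m : ℕ, ∀ F : Finset ℕ,
          ∑ j' ∈ F, ‖A j' k l m‖ ^ 2
            ≤ (lamEig d k * lamEig d l * lamEig d m) ^ (4 * (d : ℝ) / q)) →
      ∀ M N : ℕ, 1 ≤ M → M ≤ N →
        ∑ p ∈ (Finset.range (N + 1) ×ˢ Finset.range (N + 1) ×ˢ Finset.range (N + 1)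
              ×ˢ Finset.range (N + 1)).filter
            (fun p : ℕ × ℕ × ℕ × ℕ => M < max (max p.1 p.2.1) (max p.2.2.1 p.2.2.2)),
          (lamEig d p.1 * lamEig d p.2.1 * lamEig d p.2.2.1 * lamEig d p.2.2.2) ^ (-2 : ℝ)
            * ‖A p.1 p.2.1 p.2.2.1 p.2.2.2‖ ^ 2
        ≤ C * (M : ℝ) ^ (-ν) := by
  have hν₁ : ν ≤ 1 := by
    have : 0 < 6 * (d : ℝ) / q := div_pos (by norm_cast; omega) (by linarith)
    linarith
  set γ := 2 * (1 - ν) / 3 with hγ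
  set s := 4 * (d : ℝ) / q with hs
  have hpos := lamEig_pos hd
  have hsum := summable_lamEig_rpow hd (t := s - 2 - γ) (by
    linarith [show s = 2 / 3 * (6 * (d : ℝ) / q) by rw [hs]; ring])
  set S := ∑' n, lamEig d n ^ (s - 2 - γ)
  have hS : 0 < S :=
    hsum.tsum_pos (fun n => rpow_nonneg (hpos n).le _) 0 (rpow_pos_of_pos (hpos 0) _)
  refine ⟨4 * S ^ 3, by positivity, fun A hA₁ hA₂ hA₃ hA₄ M N hM _ => ?_⟩
  set R := range (N + 1)
  have hv : ∀ a b c, (lamEig d a * lamEig d b * lamEig d c) ^ s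
      = lamEig d a ^ s * lamEig d b ^ s * lamEig d c ^ s := fun a b c => by
    rw [mul_rpow (mul_pos (hpos a) (hpos b)).le (hpos c).le, mul_rpow (hpos a).le (hpos b).le]
  have huv : ∀ n, lamEig d n ^ (-2 - γ) * lamEig d n ^ s = lamEig d n ^ (s - 2 - γ) :=
    fun n => by rw [← rpow_add (hpos n)]; ring_nf
  calc _ ≤ (M : ℝ) ^ (-ν) * _ := sum_filter_lt_max_le hd (γ := γ) hν0.le (by linarith)
          (by rw [hγ]; ring) hM (f := fun j k l m => ‖A j k l m‖ ^ 2)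
          (fun _ _ _ _ => by positivity) R
    _ ≤ (M : ℝ) ^ (-ν) * (4 * (∑ n ∈ R, lamEig d n ^ (-2 - γ) * lamEig d n ^ s) ^ 3) := by
        gcongr
        exact sum_esymm₃_mul_le R (fun n => rpow_nonneg (hpos n).le _)
          (fun j k l => (hA₁ j k l R).trans_eq (hv j k l))
          (fun j k m => (hA₂ j k m R).trans_eq (hv j k m))
          (fun j l m => (hA₃ j l m R).trans_eq (hv j l m))
          (fun k l m => (hA₄ k l m R).trans_eq (hv k l m))
    _ ≤ 4 * S ^ 3 * (M : ℝ) ^ (-ν) := by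
        rw [mul_comm]
        simp only [huv]
        gcongr
        · exact sum_nonneg fun n _ => rpow_nonneg (hpos n).le _
        · exact hsum.sum_le_tsum R fun n _ => rpow_nonneg (hpos n).le _
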